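/- Let T > 0, a > 0, and let σ : [0,T] → ℝ be right-continuous with left limits, with at most finitely many discontinuity points, and satisfying σ̲ ≤ σ(u) ≤ σ̄ for all u, for constants 0 < σ̲ ≤ σ̄. For each integer B ≥ 1, with Δ_B = T/B and 𝖳_i = i·T/B, set V_i = ∫_{𝖳_{i−1}}^{𝖳_i} σ(u)² du and Q_i = ∫_{𝖳_{i−1}}^{𝖳_i} σ(u)⁴ du, and define AVAR_B^{(QMLE)} = B^{1/2} · Σ_{i=1}^B [ 5·Δ_B·a·Q_i / V_i^{1/2} + 3·a·V_i^{3/2} ]. Then AVAR_B^{(QMLE)} → 8·a·T^{1/2}·∫₀^T σ(u)³ du as B → ∞; that is, the local QMLE asymptotic variance converges to the efficiency bound AVAR^{(Bound)}_{[0,T]}. -/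

import Mathlib

open MeasureTheory Filter

/-! Auxiliary definitions -/

noncomputable def qIdx (T : ℝ) (B : ℕ) (u : ℝ) : ℕ := (⌊u * B / T⌋).toNat

noncomputable def qBlk (T : ℝ) (B i : ℕ) : Set ℝ :=
  Set.Ico ((i : ℝ) * T / B) (((i : ℝ) + 1) * T / B)

noncomputable def qX (T : ℝ) (σ : ℝ → ℝ) (k : ℕ) (B i : ℕ) : ℝ :=
  ((B : ℝ) / T) * ∫ u in qBlk T B i, σ u ^ k

noncomputable def qf (a x y : ℝ) : ℝ :=
  5 * a * y / x ^ ((1 : ℝ) / 2) + 3 * a * x ^ ((3 : ℝ) / 2)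

/-! rpow helpers -/

lemma rpow_sq_half {x : ℝ} (hx : 0 ≤ x) : (x ^ 2 : ℝ) ^ ((1 : ℝ) / 2) = x := by
  rw [← Real.rpow_natCast x 2, ← Real.rpow_mul hx]
  norm_num

lemma rpow_sq_threehalf {x : ℝ} (hx : 0 ≤ x) : (x ^ 2 : ℝ) ^ ((3 : ℝ) / 2) = x ^ 3 := by
  rw [← Real.rpow_natCast x 2, ← Real.rpow_mul hx]
  have h23 : ((2:ℕ):ℝ) * (3/2) = ((3:ℕ):ℝ) := by norm_num
  rw [h23, Real.rpow_natCast]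

/-! block geometry -/

lemma qIdx_eq (T : ℝ) (hT : 0 < T) {B i : ℕ} (hB : 0 < B) {u : ℝ}
    (hu : u ∈ qBlk T B i) : qIdx T B u = i := by
  have hBpos : (0 : ℝ) < B := by exact_mod_cast hB
  obtain ⟨h1, h2⟩ := hu
  have hfl : ⌊u * B / T⌋ = (i : ℤ) := by
    rw [Int.floor_eq_iff]
    constructor
    · push_cast
      rw [le_div_iff₀ hT]
      rw [div_le_iff₀ hBpos] at h1
      linarith
    · push_cast
      rw [div_lt_iff₀ hT]
      rw [lt_div_iff₀ hBpos] at h2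
      linarith
  unfold qIdx
  rw [hfl]
  exact Int.toNat_natCast i

lemma qBlk_subset (T : ℝ) (hT : 0 < T) {B i : ℕ} (hB : 0 < B) (hiB : i < B) :
    qBlk T B i ⊆ Set.Icc (0 : ℝ) T := by
  have hBpos : (0 : ℝ) < B := by exact_mod_cast hB
  rintro u ⟨h1, h2⟩
  constructor
  · exact le_trans (by positivity) h1
  · refine le_of_lt (lt_of_lt_of_le h2 ?_)
    rw [div_le_iff₀ hBpos]
    have hiB' : (i : ℝ) + 1 ≤ B := by exact_mod_cast hiB
    nlinarith

lemma qBlk_cover (T : ℝ) (hT : 0 < T) {B : ℕ} (hB : 0 < B) :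
    Set.Ico (0 : ℝ) T = ⋃ i ∈ Finset.range B, qBlk T B i := by
  have hBpos : (0 : ℝ) < B := by exact_mod_cast hB
  ext u
  simp only [Set.mem_iUnion, Finset.mem_range, Set.mem_Ico, exists_prop]
  constructor
  · rintro ⟨hu0, huT⟩
    have hfl0 : 0 ≤ ⌊u * B / T⌋ := Int.floor_nonneg.2 (by positivity)
    set j : ℕ := (⌊u * B / T⌋).toNat with hj
    have hjc : (j : ℝ) = ((⌊u * B / T⌋ : ℤ) : ℝ) := by
      exact_mod_cast Int.toNat_of_nonneg hfl0
    have h1 : (j : ℝ) ≤ u * B / T := by rw [hjc]; exact Int.floor_le _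
    have h2 : u * B / T < (j : ℝ) + 1 := by
      rw [hjc]; exact Int.lt_floor_add_one _
    refine ⟨j, ?_, ?_, ?_⟩
    · have hub : u * B / T < B := by
        rw [div_lt_iff₀ hT]; nlinarith
      have : (j : ℝ) < B := lt_of_le_of_lt h1 hub
      exact_mod_cast this
    · rw [div_le_iff₀ hBpos]
      rw [le_div_iff₀ hT] at h1
      linarith
    · rw [lt_div_iff₀ hBpos]
      rw [div_lt_iff₀ hT] at h2
      linarith
  · rintro ⟨i, hiB, hu1, hu2⟩
    refine ⟨le_trans (by positivity) hu1, lt_of_lt_of_le hu2 ?_⟩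
    rw [div_le_iff₀ hBpos]
    have hiB' : (i : ℝ) + 1 ≤ B := by exact_mod_cast hiB
    nlinarith

/-! integrability -/

lemma int_pow_Icc (T σhi : ℝ) (σ : ℝ → ℝ)
    (hfin : {u ∈ Set.Icc (0 : ℝ) T |
      ¬ ContinuousWithinAt σ (Set.Icc (0 : ℝ) T) u}.Finite)
    (hbd : ∀ u ∈ Set.Icc (0 : ℝ) T, |σ u| ≤ σhi) (k : ℕ) :
    IntegrableOn (fun u => σ u ^ k) (Set.Icc (0 : ℝ) T) volume := by
  set S := {u ∈ Set.Icc (0 : ℝ) T | ¬ ContinuousWithinAt σ (Set.Icc (0 : ℝ) T) u} with hS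
  have hmS : MeasurableSet (Set.Icc (0 : ℝ) T \ S) :=
    measurableSet_Icc.diff hfin.measurableSet
  have hco : ContinuousOn σ (Set.Icc (0 : ℝ) T \ S) := by
    intro u hu
    have h1 : ContinuousWithinAt σ (Set.Icc (0 : ℝ) T) u := by
      by_contra h
      exact hu.2 ⟨hu.1, h⟩
    exact h1.mono Set.diff_subset
  have h0 : AEMeasurable σ (volume.restrict (Set.Icc (0 : ℝ) T \ S)) :=
    hco.aemeasurable hmS
  have hae : (Set.Icc (0 : ℝ) T \ S : Set ℝ) =ᵐ[volume] (Set.Icc (0 : ℝ) T : Set ℝ) :=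
    diff_ae_eq_self.2 (measure_mono_null Set.inter_subset_right (hfin.measure_zero _))
  rw [Measure.restrict_congr_set hae] at h0
  have hm : AEStronglyMeasurable (fun u => σ u ^ k)
      (volume.restrict (Set.Icc (0 : ℝ) T)) :=
    (h0.pow_const k).aestronglyMeasurable
  refine Integrable.mono' (g := fun _ => σhi ^ k)
    (integrableOn_const measure_Icc_lt_top.ne) hm ?_
  refine (ae_restrict_iff' measurableSet_Icc).2 (Filter.Eventually.of_forall fun u hu => ?_)
  have h := hbd u hu
  calc ‖σ u ^ k‖ = |σ u| ^ k := by rw [Real.norm_eq_abs, abs_pow]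
    _ ≤ σhi ^ k := pow_le_pow_left₀ (abs_nonneg _) h k

/-! bounds on block averages -/

lemma qX_bounds (T : ℝ) (σ : ℝ → ℝ) {c C : ℝ} (hT : 0 < T) {B i : ℕ} (hB : 0 < B)
    (hiB : i < B) (k : ℕ)
    (hint : IntegrableOn (fun u => σ u ^ k) (Set.Icc (0 : ℝ) T) volume)
    (hcC : ∀ u ∈ Set.Icc (0 : ℝ) T, c ≤ σ u ^ k ∧ σ u ^ k ≤ C) :
    c ≤ qX T σ k B i ∧ qX T σ k B i ≤ C := by
  have hBpos : (0 : ℝ) < B := by exact_mod_cast hB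
  have hΔpos : (0 : ℝ) < T / B := by positivity
  have hsub : qBlk T B i ⊆ Set.Icc (0 : ℝ) T := qBlk_subset T hT hB hiB
  have hμ : (volume (qBlk T B i)).toReal = T / B := by
    unfold qBlk
    rw [Real.volume_Ico, show ((i : ℝ) + 1) * T / B - (i : ℝ) * T / B = T / B by ring,
      ENNReal.toReal_ofReal hΔpos.le]
  have hintb : IntegrableOn (fun u => σ u ^ k) (qBlk T B i) volume := hint.mono_set hsub
  have hμfin : volume (qBlk T B i) < ⊤ := by
    unfold qBlk; rw [Real.volume_Ico]; exact ENNReal.ofReal_lt_top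
  have h1 : c * (T / B) ≤ ∫ u in qBlk T B i, σ u ^ k := by
    have := setIntegral_mono_on (integrableOn_const hμfin.ne) hintb
      measurableSet_Ico (fun u hu => (hcC u (hsub hu)).1)
    rwa [setIntegral_const, measureReal_def, hμ, smul_eq_mul, mul_comm (T / B) c] at this
  have h2 : (∫ u in qBlk T B i, σ u ^ k) ≤ C * (T / B) := by
    have := setIntegral_mono_on hintb (integrableOn_const hμfin.ne)
      measurableSet_Ico (fun u hu => (hcC u (hsub hu)).2)
    rwa [setIntegral_const, measureReal_def, hμ, smul_eq_mul, mul_comm (T / B) C] at this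
  have hone : ((B : ℝ) / T) * (T / B) = 1 := by field_simp
  constructor
  · calc c = ((B : ℝ) / T) * (c * (T / B)) := by
          rw [show ((B : ℝ) / T) * (c * (T / B)) = c * (((B : ℝ) / T) * (T / B)) by ring,
            hone, mul_one]
      _ ≤ ((B : ℝ) / T) * ∫ u in qBlk T B i, σ u ^ k :=
          mul_le_mul_of_nonneg_left h1 (by positivity)
      _ = qX T σ k B i := rfl
  · calc qX T σ k B i = ((B : ℝ) / T) * ∫ u in qBlk T B i, σ u ^ k := rfl
      _ ≤ ((B : ℝ) / T) * (C * (T / B)) := mul_le_mul_of_nonneg_left h2 (by positivity)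
      _ = C := by
          rw [show ((B : ℝ) / T) * (C * (T / B)) = C * (((B : ℝ) / T) * (T / B)) by ring,
            hone, mul_one]

/-! convergence of block averages at a continuity point -/

lemma avg_tendsto (T : ℝ) (σ : ℝ → ℝ) (hT : 0 < T) (k : ℕ)
    (hint : IntegrableOn (fun v => σ v ^ k) (Set.Icc (0 : ℝ) T) volume)
    {u : ℝ} (hu : u ∈ Set.Ioo (0 : ℝ) T)
    (hc : ContinuousWithinAt σ (Set.Icc (0 : ℝ) T) u) :
    Tendsto (fun B : ℕ => qX T σ k B (qIdx T B u)) atTop (nhds (σ u ^ k)) := by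
  have hTne : T ≠ 0 := ne_of_gt hT
  rw [Metric.tendsto_atTop]
  intro ε hε
  have hck : ContinuousWithinAt (fun v => σ v ^ k) (Set.Icc (0 : ℝ) T) u := hc.pow k
  rw [Metric.continuousWithinAt_iff] at hck
  obtain ⟨δ, hδ0, hδ⟩ := hck (ε / 2) (by linarith)
  refine ⟨max 1 (⌈T / δ⌉₊ + 1), fun B hB => ?_⟩
  have hB1 : 1 ≤ B := le_trans (le_max_left _ _) hB
  have hB0 : 0 < B := hB1
  have hBpos : (0 : ℝ) < B := by exact_mod_cast hB1
  have hBne : (B : ℝ) ≠ 0 := ne_of_gt hBpos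
  have hTB : T / B < δ := by
    have h1 : (⌈T / δ⌉₊ + 1 : ℕ) ≤ B := le_trans (le_max_right _ _) hB
    have h3 : ((⌈T / δ⌉₊ : ℝ) + 1) ≤ B := by exact_mod_cast h1
    have h2 : T / δ < (B : ℝ) := lt_of_le_of_lt (Nat.le_ceil _) (by linarith)
    rw [div_lt_iff₀ hδ0] at h2
    rw [div_lt_iff₀ hBpos]
    linarith
  have humem : u ∈ Set.Ico (0 : ℝ) T := ⟨hu.1.le, hu.2⟩
  obtain ⟨i, hiB, hui⟩ : ∃ i, i < B ∧ u ∈ qBlk T B i := by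
    rcases Set.mem_iUnion₂.1 (by rw [← qBlk_cover T hT hB0]; exact humem) with ⟨i, hi, hmem⟩
    exact ⟨i, Finset.mem_range.1 hi, hmem⟩
  rw [qIdx_eq T hT hB0 hui]
  have hsub : qBlk T B i ⊆ Set.Icc (0 : ℝ) T := qBlk_subset T hT hB0 hiB
  have hintb : IntegrableOn (fun v => σ v ^ k) (qBlk T B i) volume := hint.mono_set hsub
  have hμ : volume (qBlk T B i) = ENNReal.ofReal (T / B) := by
    unfold qBlk
    rw [Real.volume_Ico]
    congr 1
    ring
  have hconst : (∫ _ in qBlk T B i, σ u ^ k) = (T / B) * σ u ^ k := by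
    rw [setIntegral_const, measureReal_def, hμ, ENNReal.toReal_ofReal (by positivity), smul_eq_mul]
  have htr : (volume (qBlk T B i)).toReal = T / B := by
    rw [hμ, ENNReal.toReal_ofReal (by positivity)]
  have hnorm : ‖(∫ v in qBlk T B i, σ v ^ k) - (T / B) * σ u ^ k‖ ≤ (ε / 2) * (T / B) := by
    rw [← hconst, ← integral_sub hintb (integrableOn_const (by
      rw [hμ]; exact ENNReal.ofReal_ne_top)), ← htr]
    apply norm_setIntegral_le_of_norm_le_const
    · rw [hμ]; exact ENNReal.ofReal_lt_top
    · intro v hv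
      have hvI : v ∈ Set.Icc (0 : ℝ) T := hsub hv
      have hlen : ((i : ℝ) + 1) * T / B - (i : ℝ) * T / B = T / B := by ring
      have hdist : dist v u < δ := by
        rw [Real.dist_eq, abs_sub_lt_iff]
        obtain ⟨hv1, hv2⟩ := hv
        obtain ⟨hu1, hu2⟩ := hui
        constructor <;> linarith
      have h := hδ hvI hdist
      rw [Real.dist_eq] at h
      rw [Real.norm_eq_abs]
      exact le_of_lt h
  have hid : qX T σ k B i - σ u ^ k
      = ((B : ℝ) / T) * ((∫ v in qBlk T B i, σ v ^ k) - (T / B) * σ u ^ k) := by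
    unfold qX
    field_simp
  rw [Real.dist_eq, hid, abs_mul, abs_of_pos (show (0 : ℝ) < (B : ℝ) / T by positivity)]
  rw [Real.norm_eq_abs] at hnorm
  calc ((B : ℝ) / T) * |(∫ v in qBlk T B i, σ v ^ k) - (T / B) * σ u ^ k|
      ≤ ((B : ℝ) / T) * ((ε / 2) * (T / B)) :=
        mul_le_mul_of_nonneg_left hnorm (by positivity)
    _ = ε / 2 := by field_simp
    _ < ε := by linarith

/-! step-function sum -/

lemma step_sum (T : ℝ) (hT : 0 < T) {B : ℕ} (hB : 0 < B) (φ : ℕ → ℝ) (g : ℝ → ℝ)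
    (hg : ∀ i < B, ∀ u ∈ qBlk T B i, g u = φ i) :
    (∫ u in Set.Ico (0 : ℝ) T, g u) = ∑ i ∈ Finset.range B, (T / B) * φ i := by
  have hBpos : (0 : ℝ) < B := by exact_mod_cast hB
  rw [qBlk_cover T hT hB]
  have hrw := MeasureTheory.integral_biUnion_finset (f := g) (μ := volume)
    (Finset.range B) (s := fun i => qBlk T B i)
    (fun i _ => measurableSet_Ico)
    (by
      intro i hi j hj hij
      simp only [Function.onFun]
      unfold qBlk
      rw [Set.Ico_disjoint_Ico]
      rcases lt_or_gt_of_ne hij with h | h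
      · have hle : ((i : ℝ) + 1) * T / B ≤ (j : ℝ) * T / B := by
          have hij' : ((i : ℝ) + 1) ≤ (j : ℝ) := by exact_mod_cast h
          exact (div_le_div_iff_of_pos_right hBpos).2 (by nlinarith)
        exact le_trans (min_le_left _ _) (le_trans hle (le_max_right _ _))
      · have hle : ((j : ℝ) + 1) * T / B ≤ (i : ℝ) * T / B := by
          have hij' : ((j : ℝ) + 1) ≤ (i : ℝ) := by exact_mod_cast h
          exact (div_le_div_iff_of_pos_right hBpos).2 (by nlinarith)
        exact le_trans (min_le_right _ _) (le_trans hle (le_max_left _ _)))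
    (by
      intro i hi
      have hμfin : volume (qBlk T B i) < ⊤ := by
        unfold qBlk; rw [Real.volume_Ico]; exact ENNReal.ofReal_lt_top
      exact (integrableOn_const hμfin.ne).congr_fun
        (fun u hu => (hg i (Finset.mem_range.1 hi) u hu).symm) measurableSet_Ico)
  rw [hrw]
  refine Finset.sum_congr rfl fun i hi => ?_
  beta_reduce
  unfold qBlk
  rw [setIntegral_congr_fun measurableSet_Ico
    (fun u hu => hg i (Finset.mem_range.1 hi) u hu)]
  rw [setIntegral_const, measureReal_def]
  rw [Real.volume_Ico, show ((i : ℝ) + 1) * T / B - (i : ℝ) * T / B = T / B by ring,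
    ENNReal.toReal_ofReal (by positivity), smul_eq_mul]

/-! per-block algebra -/

lemma summand_eq (a : ℝ) {Δ x y : ℝ} (hΔ : 0 < Δ) (hx : 0 < x) :
    5 * Δ * a * (Δ * y) / (Δ * x) ^ ((1 : ℝ) / 2) + 3 * a * (Δ * x) ^ ((3 : ℝ) / 2)
      = Δ ^ ((3 : ℝ) / 2) * qf a x y := by
  rw [Real.mul_rpow hΔ.le hx.le, Real.mul_rpow hΔ.le hx.le]
  have h1 : Δ ^ ((1 : ℝ) / 2) ≠ 0 := by positivity
  have hx1 : x ^ ((1 : ℝ) / 2) ≠ 0 := by positivity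
  have h2 : Δ ^ ((3 : ℝ) / 2) * Δ ^ ((1 : ℝ) / 2) = Δ ^ 2 := by
    rw [← Real.rpow_add hΔ, ← Real.rpow_natCast Δ 2]
    norm_num
  unfold qf
  rw [mul_add]
  congr 1
  · rw [mul_div_assoc']
    rw [div_eq_div_iff (by positivity : (Δ ^ ((1:ℝ)/2) * x ^ ((1:ℝ)/2)) ≠ 0) hx1]
    linear_combination (-(5 * a * y * x ^ ((1:ℝ)/2))) * h2
  · ring

/-- Convergence of the local QMLE asymptotic variance to the efficiency bound,
for a càdlàg volatility path bounded away from `0` with at most finitely many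
discontinuities. -/
theorem stmt9 (T a σlo σhi : ℝ) (hT : 0 < T) (ha : 0 < a)
    (hσlo : 0 < σlo) (hσ : σlo ≤ σhi) (σ : ℝ → ℝ)
    (hrc : ∀ u ∈ Set.Ico (0 : ℝ) T, ContinuousWithinAt σ (Set.Ici u) u)
    (hll : ∀ u ∈ Set.Ioc (0 : ℝ) T,
      ∃ L : ℝ, Tendsto σ (nhdsWithin u (Set.Iio u)) (nhds L))
    (hfin : {u ∈ Set.Icc (0 : ℝ) T |
      ¬ ContinuousWithinAt σ (Set.Icc (0 : ℝ) T) u}.Finite)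
    (hbd : ∀ u ∈ Set.Icc (0 : ℝ) T, σlo ≤ σ u ∧ σ u ≤ σhi) :
    Tendsto (fun B : ℕ =>
        (B : ℝ) ^ ((1 : ℝ) / 2) * ∑ i ∈ Finset.range B,
          (5 * (T / B) * a *
              (∫ u in ((i : ℝ) * T / B)..(((i : ℝ) + 1) * T / B), σ u ^ 4) /
              (∫ u in ((i : ℝ) * T / B)..(((i : ℝ) + 1) * T / B), σ u ^ 2) ^ ((1 : ℝ) / 2)
            + 3 * a *
              (∫ u in ((i : ℝ) * T / B)..(((i : ℝ) + 1) * T / B), σ u ^ 2) ^ ((3 : ℝ) / 2)))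
      atTop
      (nhds (8 * a * T ^ ((1 : ℝ) / 2) * ∫ u in (0:ℝ)..T, σ u ^ 3)) := by
  have hTne : T ≠ 0 := ne_of_gt hT
  have hσhi : 0 < σhi := lt_of_lt_of_le hσlo hσ
  have habs : ∀ u ∈ Set.Icc (0 : ℝ) T, |σ u| ≤ σhi := fun u hu => by
    rw [abs_of_pos (lt_of_lt_of_le hσlo (hbd u hu).1)]
    exact (hbd u hu).2
  have hint : ∀ k : ℕ, IntegrableOn (fun u => σ u ^ k) (Set.Icc (0 : ℝ) T) volume :=
    fun k => int_pow_Icc T σhi σ hfin habs k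
  have hcC : ∀ k : ℕ, ∀ u ∈ Set.Icc (0 : ℝ) T, σlo ^ k ≤ σ u ^ k ∧ σ u ^ k ≤ σhi ^ k := by
    intro k u hu
    obtain ⟨h1, h2⟩ := hbd u hu
    exact ⟨pow_le_pow_left₀ hσlo.le h1 k, pow_le_pow_left₀ (le_trans hσlo.le h1) h2 k⟩
  set C : ℝ := 5 * a * σhi ^ 4 / σlo + 3 * a * σhi ^ 3 with hC
  set G : ℕ → ℝ → ℝ :=
    fun B u => qf a (qX T σ 2 B (qIdx T B u)) (qX T σ 4 B (qIdx T B u)) with hG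
  -- uniform bound
  have hGbd : ∀ B : ℕ, 0 < B → ∀ u ∈ Set.Ico (0 : ℝ) T, ‖G B u‖ ≤ C := by
    intro B hB u hu
    obtain ⟨i, hiB, hui⟩ : ∃ i, i < B ∧ u ∈ qBlk T B i := by
      rcases Set.mem_iUnion₂.1 (by rw [← qBlk_cover T hT hB]; exact hu) with ⟨i, hi, hmem⟩
      exact ⟨i, Finset.mem_range.1 hi, hmem⟩
    have h2 := qX_bounds T σ hT hB hiB 2 (hint 2) (hcC 2)
    have h4 := qX_bounds T σ hT hB hiB 4 (hint 4) (hcC 4)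
    have hxpos : 0 < qX T σ 2 B i := lt_of_lt_of_le (by positivity) h2.1
    have hypos : 0 < qX T σ 4 B i := lt_of_lt_of_le (by positivity) h4.1
    rw [hG]
    beta_reduce
    rw [qIdx_eq T hT hB hui]
    have hq1 : 0 ≤ qf a (qX T σ 2 B i) (qX T σ 4 B i) := by
      unfold qf
      positivity
    rw [Real.norm_eq_abs, abs_of_nonneg hq1]
    unfold qf
    have e1 : (σlo ^ 2 : ℝ) ^ ((1 : ℝ) / 2) = σlo := rpow_sq_half hσlo.le
    have e2 : (σhi ^ 2 : ℝ) ^ ((3 : ℝ) / 2) = σhi ^ 3 := rpow_sq_threehalf hσhi.le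
    have hxr : σlo ≤ (qX T σ 2 B i) ^ ((1 : ℝ) / 2) := by
      rw [← e1]
      exact Real.rpow_le_rpow (by positivity) h2.1 (by norm_num)
    have hx32 : (qX T σ 2 B i) ^ ((3 : ℝ) / 2) ≤ σhi ^ 3 := by
      rw [← e2]
      exact Real.rpow_le_rpow hxpos.le h2.2 (by norm_num)
    have t1 : 5 * a * qX T σ 4 B i / (qX T σ 2 B i) ^ ((1 : ℝ) / 2)
        ≤ 5 * a * σhi ^ 4 / σlo :=
      div_le_div₀ (by positivity) (by nlinarith [h4.2]) hσlo hxr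
    have t2 : 3 * a * (qX T σ 2 B i) ^ ((3 : ℝ) / 2) ≤ 3 * a * σhi ^ 3 := by nlinarith
    rw [hC]
    linarith
  -- pointwise limit
  have hlimpt : ∀ u ∈ Set.Ioo (0 : ℝ) T, ContinuousWithinAt σ (Set.Icc (0 : ℝ) T) u →
      Tendsto (fun B : ℕ => G B u) atTop (nhds (8 * a * σ u ^ 3)) := by
    intro u hu hcu
    have hσu : 0 < σ u := lt_of_lt_of_le hσlo (hbd u (Set.Ioo_subset_Icc_self hu)).1
    have h2 := avg_tendsto T σ hT 2 (hint 2) hu hcu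
    have h4 := avg_tendsto T σ hT 4 (hint 4) hu hcu
    have hx2ne : (σ u ^ 2 : ℝ) ≠ 0 := by positivity
    have t1 : Tendsto (fun B : ℕ => (qX T σ 2 B (qIdx T B u)) ^ ((1 : ℝ) / 2)) atTop
        (nhds (σ u)) := by
      have := h2.rpow_const (p := (1 : ℝ) / 2) (Or.inl hx2ne)
      rwa [rpow_sq_half hσu.le] at this
    have t2 : Tendsto (fun B : ℕ => (qX T σ 2 B (qIdx T B u)) ^ ((3 : ℝ) / 2)) atTop
        (nhds (σ u ^ 3)) := by
      have := h2.rpow_const (p := (3 : ℝ) / 2) (Or.inr (by norm_num))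
      rwa [rpow_sq_threehalf hσu.le] at this
    have t3 : Tendsto (fun B : ℕ =>
        5 * a * qX T σ 4 B (qIdx T B u) / (qX T σ 2 B (qIdx T B u)) ^ ((1 : ℝ) / 2)) atTop
        (nhds (5 * a * σ u ^ 4 / σ u)) :=
      (Tendsto.mul tendsto_const_nhds h4).div t1 (ne_of_gt hσu)
    have t4 : Tendsto (fun B : ℕ =>
        3 * a * (qX T σ 2 B (qIdx T B u)) ^ ((3 : ℝ) / 2)) atTop
        (nhds (3 * a * σ u ^ 3)) := Tendsto.mul tendsto_const_nhds t2
    have t5 := t3.add t4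
    have heq : 5 * a * σ u ^ 4 / σ u + 3 * a * σ u ^ 3 = 8 * a * σ u ^ 3 := by
      field_simp
      ring
    rw [heq] at t5
    exact t5
  -- dominated convergence
  have hmain : Tendsto (fun B : ℕ => ∫ u in Set.Ico (0 : ℝ) T, G B u) atTop
      (nhds (∫ u in Set.Ico (0 : ℝ) T, 8 * a * σ u ^ 3)) := by
    apply tendsto_integral_filter_of_dominated_convergence (fun _ => C)
    · filter_upwards with B
      have hqm : Measurable (qIdx T B) := by
        have h1 : Measurable fun u : ℝ => u * B / T :=
          (measurable_id.mul_const _).div_const _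
        exact (by measurability : Measurable Int.toNat).comp (Int.measurable_floor.comp h1)
      exact ((measurable_from_nat
        (f := fun n => qf a (qX T σ 2 B n) (qX T σ 4 B n))).comp hqm).aestronglyMeasurable
    · filter_upwards [eventually_ge_atTop 1] with B hB1
      exact (ae_restrict_iff' measurableSet_Ico).2
        (Filter.Eventually.of_forall fun u hu => hGbd B hB1 u hu)
    · exact integrableOn_const measure_Ico_lt_top.ne
    · have hN : volume ({(0 : ℝ)} ∪ {u ∈ Set.Icc (0 : ℝ) T |
          ¬ ContinuousWithinAt σ (Set.Icc (0 : ℝ) T) u}) = 0 :=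
        ((Set.finite_singleton 0).union hfin).measure_zero _
      have h1 : ∀ᵐ u ∂(volume : Measure ℝ), u ∉ ({(0 : ℝ)} ∪ {u ∈ Set.Icc (0 : ℝ) T |
          ¬ ContinuousWithinAt σ (Set.Icc (0 : ℝ) T) u}) := by
        rw [MeasureTheory.ae_iff]
        simp only [not_not, Set.setOf_mem_eq]
        exact hN
      filter_upwards [ae_restrict_mem measurableSet_Ico, ae_restrict_of_ae h1] with u hu hnu
      have hu0 : u ∈ Set.Ioo (0 : ℝ) T := by
        refine ⟨lt_of_le_of_ne hu.1 fun h => hnu (Or.inl ?_), hu.2⟩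
        exact Set.mem_singleton_iff.2 h.symm
      have hcu : ContinuousWithinAt σ (Set.Icc (0 : ℝ) T) u := by
        by_contra h
        exact hnu (Or.inr ⟨Set.Ico_subset_Icc_self hu, h⟩)
      exact hlimpt u hu0 hcu
  have key := hmain.const_mul (T ^ ((1 : ℝ) / 2))
  have hpt : T ^ ((1 : ℝ) / 2) * ∫ u in Set.Ico (0 : ℝ) T, 8 * a * σ u ^ 3
      = 8 * a * T ^ ((1 : ℝ) / 2) * ∫ u in (0 : ℝ)..T, σ u ^ 3 := by
    rw [MeasureTheory.integral_const_mul, intervalIntegral.integral_of_le hT.le,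
      MeasureTheory.integral_Ioc_eq_integral_Ioo, MeasureTheory.integral_Ico_eq_integral_Ioo]
    ring
  rw [hpt] at key
  refine Tendsto.congr' ?_ key
  filter_upwards [eventually_ge_atTop 1] with B hB1
  have hB : 0 < B := hB1
  have hBpos : (0 : ℝ) < B := by exact_mod_cast hB
  have hΔpos : (0 : ℝ) < T / B := by positivity
  have hsum := step_sum T hT hB (fun i => qf a (qX T σ 2 B i) (qX T σ 4 B i))
    (fun u => G B u) (fun i hi u hu => by rw [hG]; beta_reduce; rw [qIdx_eq T hT hB hu])
  rw [hsum, Finset.mul_sum, Finset.mul_sum]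
  refine Finset.sum_congr rfl fun i hi => ?_
  have hiB : i < B := Finset.mem_range.1 hi
  have hle : (i : ℝ) * T / B ≤ ((i : ℝ) + 1) * T / B :=
    (div_le_div_iff_of_pos_right hBpos).2 (by nlinarith)
  have hVconv : ∀ k : ℕ, (∫ u in ((i : ℝ) * T / B)..(((i : ℝ) + 1) * T / B), σ u ^ k)
      = (T / B) * qX T σ k B i := by
    intro k
    rw [intervalIntegral.integral_of_le hle, MeasureTheory.integral_Ioc_eq_integral_Ioo,
      ← MeasureTheory.integral_Ico_eq_integral_Ioo]
    unfold qX qBlk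
    field_simp
  have h2 := qX_bounds T σ hT hB hiB 2 (hint 2) (hcC 2)
  have hxpos : 0 < qX T σ 2 B i := lt_of_lt_of_le (by positivity) h2.1
  rw [hVconv 2, hVconv 4, summand_eq a hΔpos hxpos]
  have hkey : (B : ℝ) ^ ((1 : ℝ) / 2) * (T / B) ^ ((3 : ℝ) / 2)
      = T ^ ((1 : ℝ) / 2) * (T / B) := by
    rw [show (3 : ℝ) / 2 = 1 / 2 + 1 by norm_num, Real.rpow_add hΔpos, Real.rpow_one,
      ← mul_assoc, ← Real.mul_rpow (Nat.cast_nonneg B) hΔpos.le,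
      show (B : ℝ) * (T / B) = T by field_simp]
  linear_combination (-(qf a (qX T σ 2 B i) (qX T σ 4 B i))) * hkey
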